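/- Let P be a convex polygon in the plane, let e be a side of P of length l, and let α > 0 be such that for every other side e' of P, the angle between the lines containing e and e' is at least α. Then the isosceles triangle with base e, base angles equal to α, lying on the same side of the line through e as P, is contained in P; in particular, the area of P is at least (1/4) l² sin α cos α. -/

import Mathlib

open MeasureTheory

noncomputable section

/-- A convex polygon in the plane: the convex hull of a finite set of points,
with nonempty interior. -/
def IsConvexPolygon (P : Set (EuclideanSpace ℝ (Fin 2))) : Prop :=
  (∃ S : Finset (EuclideanSpace ℝ (Fin 2)), P = convexHull ℝ (S : Set (EuclideanSpace ℝ (Fin 2)))) ∧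
  (interior P).Nonempty

/-- The face of `P` with outward normal vector `n`: the set of maximizers of `⟪·, n⟫` on `P`. -/
def face (P : Set (EuclideanSpace ℝ (Fin 2))) (n : EuclideanSpace ℝ (Fin 2)) :
    Set (EuclideanSpace ℝ (Fin 2)) :=
  {x | x ∈ P ∧ ∀ y ∈ P, inner (𝕜 := ℝ) y n ≤ inner (𝕜 := ℝ) x n}

/-- The dimension of a face: the dimension of its affine hull. -/
def faceDim (F : Set (EuclideanSpace ℝ (Fin 2))) : ℕ :=
  Module.finrank ℝ (affineSpan ℝ F).direction

/-- `F` is a side (1-dimensional face) of the convex polygon `P`. -/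
def IsSide (P F : Set (EuclideanSpace ℝ (Fin 2))) : Prop :=
  ∃ n : EuclideanSpace ℝ (Fin 2), ‖n‖ = 1 ∧ F = face P n ∧ faceDim F = 1

/-- Two segments are parallel: the lines containing them have the same direction. -/
def SegParallel (F G : Set (EuclideanSpace ℝ (Fin 2))) : Prop :=
  (affineSpan ℝ F).direction = (affineSpan ℝ G).direction

/-- The perimeter of a convex body: the 1-dimensional Hausdorff measure of its boundary. -/
def perimeter (P : Set (EuclideanSpace ℝ (Fin 2))) : ℝ :=
  (μH[(1 : ℝ)] (frontier P)).toReal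

local notation "E2" => EuclideanSpace ℝ (Fin 2)

lemma real_inner_coords (x y : E2) : inner (𝕜 := ℝ) x y = x 0 * y 0 + x 1 * y 1 := by
  simp [PiLp.inner_apply, Fin.sum_univ_two]; ring

lemma norm_sq_coords (x : E2) : ‖x‖ ^ 2 = x 0 ^ 2 + x 1 ^ 2 := by
  rw [← real_inner_self_eq_norm_sq, real_inner_coords]; ring

/-- Parseval for an orthonormal pair in the plane. -/
lemma parseval2 (x y u : E2) (hxy : inner (𝕜 := ℝ) x y = 0) (hx : ‖x‖ = 1) (hy : ‖y‖ = 1) :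
    (inner (𝕜 := ℝ) x u) ^ 2 + (inner (𝕜 := ℝ) y u) ^ 2 = ‖u‖ ^ 2 := by
  have h2 : x 0 ^ 2 + x 1 ^ 2 = 1 := by rw [← norm_sq_coords, hx]; norm_num
  have h3 : y 0 ^ 2 + y 1 ^ 2 = 1 := by rw [← norm_sq_coords, hy]; norm_num
  have h1 : x 0 * y 0 + x 1 * y 1 = 0 := by rw [← real_inner_coords]; exact hxy
  have hk : (y 0 * x 1 - y 1 * x 0) ^ 2 = 1 := by
    linear_combination (y 0 ^ 2 + y 1 ^ 2) * h2 + h3 - (x 0 * y 0 + x 1 * y 1) * h1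
  have hyu : y 0 * u 0 + y 1 * u 1
      = (y 0 * x 1 - y 1 * x 0) * (u 0 * x 1 - u 1 * x 0) := by
    linear_combination (-(y 0 * u 0 + y 1 * u 1)) * h2 + (x 0 * u 0 + x 1 * u 1) * h1
  rw [real_inner_coords, real_inner_coords, norm_sq_coords]
  linear_combination ((y 0 * u 0 + y 1 * u 1) + (y 0 * x 1 - y 1 * x 0) * (u 0 * x 1 - u 1 * x 0)) * hyu
    + (u 0 * x 1 - u 1 * x 0) ^ 2 * hk + (u 0 ^ 2 + u 1 ^ 2) * h2

lemma face_smul (P : Set E2) (u : E2) (r : ℝ) (hr : 0 < r) : face P (r • u) = face P u := by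
  unfold face
  ext x
  simp only [Set.mem_setOf_eq, inner_smul_right]
  constructor
  · rintro ⟨hx, h⟩
    exact ⟨hx, fun y hy => by have := h y hy; simpa using (mul_le_mul_iff_right₀ hr).1 (by simpa using this)⟩
  · rintro ⟨hx, h⟩
    exact ⟨hx, fun y hy => by have := h y hy; exact (mul_le_mul_iff_right₀ hr).2 this⟩

lemma interior_hyperplane_empty (w : E2) (hw : w ≠ 0) (r : ℝ) :
    interior {y : E2 | inner (𝕜 := ℝ) y w = r} = ∅ := by
  by_contra h
  obtain ⟨x, hx⟩ := Set.nonempty_iff_ne_empty.2 h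
  obtain ⟨ε, hε, hball⟩ := Metric.isOpen_iff.1 isOpen_interior x hx
  have hxm : x ∈ {y : E2 | inner (𝕜 := ℝ) y w = r} := interior_subset hx
  rw [Set.mem_setOf_eq] at hxm
  set δ := ε / (2 * ‖w‖) with hδ
  have hwn : 0 < ‖w‖ := norm_pos_iff.2 hw
  have hδpos : 0 < δ := by positivity
  have hmem : x + δ • w ∈ Metric.ball x ε := by
    rw [Metric.mem_ball, dist_eq_norm]
    have : ‖x + δ • w - x‖ = δ * ‖w‖ := by
      rw [show x + δ • w - x = δ • w by abel, norm_smul, Real.norm_eq_abs, abs_of_pos hδpos]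
    rw [this, hδ]
    rw [div_mul_eq_mul_div]
    rw [div_lt_iff₀ (by positivity)]
    nlinarith
  have h2 : x + δ • w ∈ {y : E2 | inner (𝕜 := ℝ) y w = r} := interior_subset (hball hmem)
  rw [Set.mem_setOf_eq, inner_add_left, real_inner_smul_left, hxm, real_inner_self_eq_norm_sq] at h2
  have hw2 : 0 < ‖w‖ ^ 2 := by positivity
  nlinarith

/-- faces of directions `u ≠ 0` have dimension at most one. -/
lemma faceDim_le_one (P : Set E2) (u : E2) (hu : u ≠ 0) : faceDim (face P u) ≤ 1 := by
  unfold faceDim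
  rw [direction_affineSpan]
  have hle : vectorSpan ℝ (face P u) ≤ (Submodule.span ℝ {u})ᗮ := by
    rw [vectorSpan_def, Submodule.span_le]
    rintro v ⟨x, hx, y, hy, rfl⟩
    rw [SetLike.mem_coe, Submodule.mem_orthogonal_singleton_iff_inner_right, real_inner_comm]
    have h1 : inner (𝕜 := ℝ) x u ≤ inner (𝕜 := ℝ) y u := hy.2 x hx.1
    have h2 : inner (𝕜 := ℝ) y u ≤ inner (𝕜 := ℝ) x u := hx.2 y hy.1
    simp only [vsub_eq_sub]
    rw [inner_sub_left]
    linarith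
  have horth : Module.finrank ℝ ((Submodule.span ℝ {u})ᗮ) = 1 := by
    have h := Submodule.finrank_add_finrank_orthogonal (K := Submodule.span ℝ {u}) (E := E2)
    rw [finrank_span_singleton hu] at h
    have h2 : Module.finrank ℝ E2 = 2 := finrank_euclideanSpace_fin
    omega
  calc Module.finrank ℝ (vectorSpan ℝ (face P u)) ≤ Module.finrank ℝ ((Submodule.span ℝ {u})ᗮ) :=
        Submodule.finrank_mono hle
    _ = 1 := horth

set_option maxHeartbeats 1000000 in
/-- Key geometric estimate: the apex of the isosceles triangle lies below every
line through the base endpoints whose normal makes angle at least `α` with `n`. -/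
lemma apex_le (a b n u : E2) (α : ℝ) (hab : a ≠ b) (hn : ‖n‖ = 1) (hu : ‖u‖ = 1)
    (hperp : inner (𝕜 := ℝ) (b - a) n = 0) (hcos : |inner (𝕜 := ℝ) n u| ≤ Real.cos α)
    (hα : 0 < α) (hα' : α < Real.pi / 2) :
    inner (𝕜 := ℝ) ((1/2 : ℝ) • (a + b) - ((dist a b / 2) * Real.tan α) • n) u
      ≤ max (inner (𝕜 := ℝ) a u) (inner (𝕜 := ℝ) b u) := by
  set l := dist a b with hl
  have hlpos : 0 < l := dist_pos.2 hab
  set t := l / 2 * Real.tan α with hts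
  have hcospos : 0 < Real.cos α := Real.cos_pos_of_mem_Ioo ⟨by linarith [Real.pi_pos], hα'⟩
  have hsinpos : 0 < Real.sin α := Real.sin_pos_of_pos_of_lt_pi hα (by linarith [Real.pi_pos])
  have htanpos : 0 < Real.tan α := Real.tan_pos_of_pos_of_lt_pi_div_two hα hα'
  have htpos : 0 < t := by positivity
  set X := inner (𝕜 := ℝ) n u with hX
  set Z := inner (𝕜 := ℝ) (b - a) u with hZ
  -- Parseval
  have hba : ‖b - a‖ = l := by rw [hl, dist_eq_norm, norm_sub_rev]
  have hy1 : ‖l⁻¹ • (b - a)‖ = 1 := by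
    rw [norm_smul, Real.norm_eq_abs, abs_of_pos (by positivity), hba]
    field_simp
  have hxy : inner (𝕜 := ℝ) n (l⁻¹ • (b - a)) = 0 := by
    rw [real_inner_smul_right, real_inner_comm, hperp, mul_zero]
  have hpar : X ^ 2 + (l⁻¹ * Z) ^ 2 = 1 := by
    have h := parseval2 n (l⁻¹ • (b - a)) u hxy hn hy1
    rw [real_inner_smul_left, hu, one_pow] at h
    exact h
  -- |Y| ≥ sin α
  have hYabs : Real.sin α ≤ |l⁻¹ * Z| := by
    have h1 : (l⁻¹ * Z) ^ 2 = 1 - X ^ 2 := by linarith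
    have h2 : Real.sin α ^ 2 ≤ (l⁻¹ * Z) ^ 2 := by
      have hXle : X ^ 2 ≤ Real.cos α ^ 2 := by
        have := sq_abs X
        nlinarith [abs_nonneg X, hcos]
      have := Real.sin_sq_add_cos_sq α
      nlinarith
    nlinarith [sq_abs (l⁻¹ * Z), abs_nonneg (l⁻¹ * Z)]
  -- main bound : t * |X| ≤ |Z| / 2
  have hmain : t * |X| ≤ |Z| / 2 := by
    have hZabs : |Z| = l * |l⁻¹ * Z| := by
      rw [abs_mul, abs_of_pos (show (0:ℝ) < l⁻¹ by positivity)]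
      field_simp
    have h1 : Real.tan α * |X| ≤ Real.sin α := by
      have := Real.tan_eq_sin_div_cos α
      rw [this]
      rw [div_mul_eq_mul_div, div_le_iff₀ hcospos]
      nlinarith [abs_nonneg X]
    calc t * |X| = l / 2 * (Real.tan α * |X|) := by rw [hts]; ring
      _ ≤ l / 2 * Real.sin α := mul_le_mul_of_nonneg_left h1 (by positivity)
      _ ≤ l / 2 * |l⁻¹ * Z| := mul_le_mul_of_nonneg_left hYabs (by positivity)
      _ = |Z| / 2 := by rw [hZabs]; ring
  -- put together
  have hm : inner (𝕜 := ℝ) ((1/2 : ℝ) • (a + b)) u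
      = (inner (𝕜 := ℝ) a u + inner (𝕜 := ℝ) b u) / 2 := by
    rw [real_inner_smul_left, inner_add_left]; ring
  have hc : inner (𝕜 := ℝ) ((1/2 : ℝ) • (a + b) - ((dist a b / 2) * Real.tan α) • n) u
      = (inner (𝕜 := ℝ) a u + inner (𝕜 := ℝ) b u) / 2 - t * X := by
    rw [inner_sub_left, hm, real_inner_smul_left, ← hl, ← hts, hX]
  have hZ' : Z = inner (𝕜 := ℝ) b u - inner (𝕜 := ℝ) a u := by rw [hZ, inner_sub_left]
  rw [hc]
  rcases le_total 0 Z with hz | hz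
  · apply le_max_of_le_right
    have : -(t * X) ≤ t * |X| := by nlinarith [neg_abs_le X, abs_nonneg X]
    rw [abs_of_nonneg hz] at hmain
    linarith
  · apply le_max_of_le_left
    have : -(t * X) ≤ t * |X| := by nlinarith [neg_abs_le X, abs_nonneg X]
    rw [abs_of_nonpos hz] at hmain
    linarith

/-- Rotation by 90 degrees. -/
def rot (u : E2) : E2 := (WithLp.equiv 2 (Fin 2 → ℝ)).symm ![-(u 1), u 0]

lemma rot_apply0 (u : E2) : rot u 0 = -(u 1) := rfl
lemma rot_apply1 (u : E2) : rot u 1 = u 0 := rfl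

lemma inner_rot_self (u : E2) : inner (𝕜 := ℝ) u (rot u) = 0 := by
  rw [real_inner_coords, rot_apply0, rot_apply1]; ring

lemma rot_ne_zero (u : E2) (hu : u ≠ 0) : rot u ≠ 0 := by
  intro h
  apply hu
  have h0 : u 0 = 0 := by
    have := congrArg (fun v : E2 => v 1) h
    simpa [rot_apply1] using this
  have h1 : u 1 = 0 := by
    have := congrArg (fun v : E2 => v 0) h
    simpa [rot_apply0] using this
  ext i
  fin_cases i <;> simp [h0, h1]

/-- Rotating a strictly separating direction until it hits a second vertex. -/
lemma exit_ray (S : Finset E2) (p u w cp : E2)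
    (hA : ∀ s ∈ S, s ≠ p → inner (𝕜 := ℝ) (s - p) u < 0)
    (hC : 0 < inner (𝕜 := ℝ) cp u)
    (hD : inner (𝕜 := ℝ) cp w = 0)
    (hT : ∃ s ∈ S, 0 < inner (𝕜 := ℝ) (s - p) w) :
    ∃ u' s₀, s₀ ∈ S ∧ s₀ ≠ p ∧ inner (𝕜 := ℝ) (s₀ - p) u' = 0 ∧
      (∀ s ∈ S, inner (𝕜 := ℝ) (s - p) u' ≤ 0) ∧ 0 < inner (𝕜 := ℝ) cp u' := by
  classical
  set T := S.filter (fun s => 0 < inner (𝕜 := ℝ) (s - p) w) with hTdef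
  have hTne : T.Nonempty := by
    obtain ⟨s, hs, hsw⟩ := hT
    exact ⟨s, Finset.mem_filter.2 ⟨hs, hsw⟩⟩
  set g : E2 → ℝ := fun s => -(inner (𝕜 := ℝ) (s - p) u) / inner (𝕜 := ℝ) (s - p) w with hg
  obtain ⟨s₀, hs₀T, hs₀min⟩ := Finset.exists_mem_eq_inf' hTne g
  set r := T.inf' hTne g with hr
  have hs₀S : s₀ ∈ S := (Finset.mem_filter.1 hs₀T).1
  have hs₀w : 0 < inner (𝕜 := ℝ) (s₀ - p) w := (Finset.mem_filter.1 hs₀T).2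
  have hs₀p : s₀ ≠ p := by
    intro h
    rw [h, sub_self, inner_zero_left] at hs₀w
    exact lt_irrefl 0 hs₀w
  have hs₀u : inner (𝕜 := ℝ) (s₀ - p) u < 0 := hA s₀ hs₀S hs₀p
  have hrpos : 0 < r := by
    rw [hs₀min, hg]
    exact div_pos (by linarith) hs₀w
  refine ⟨u + r • w, s₀, hs₀S, hs₀p, ?_, ?_, ?_⟩
  · rw [inner_add_right, real_inner_smul_right]
    rw [hs₀min, hg]
    rw [div_mul_cancel₀ _ (ne_of_gt hs₀w)]
    ring
  · intro s hs
    rw [inner_add_right, real_inner_smul_right]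
    by_cases hsp : s = p
    · rw [hsp, sub_self, inner_zero_left, inner_zero_left]; simp
    · have hsu : inner (𝕜 := ℝ) (s - p) u < 0 := hA s hs hsp
      by_cases hsT : s ∈ T
      · have hsw : 0 < inner (𝕜 := ℝ) (s - p) w := (Finset.mem_filter.1 hsT).2
        have hrle : r ≤ g s := Finset.inf'_le g hsT
        rw [hg] at hrle
        have := (le_div_iff₀ hsw).1 hrle
        linarith
      · have hsw : inner (𝕜 := ℝ) (s - p) w ≤ 0 := by
          by_contra hpos
          exact hsT (Finset.mem_filter.2 ⟨hs, lt_of_not_ge hpos⟩)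
        nlinarith
  · rw [inner_add_right, real_inner_smul_right, hD, mul_zero, add_zero]
    exact hC

def stdTri : Set E2 := {v : E2 | 0 < v 0 ∧ 0 < v 1 ∧ v 0 + v 1 < 1}

lemma volume_prod_tri : volume {p : ℝ × ℝ | 0 < p.1 ∧ 0 < p.2 ∧ p.1 + p.2 < 1}
    = ENNReal.ofReal (1/2 : ℝ) := by
  have hset : {p : ℝ × ℝ | 0 < p.1 ∧ 0 < p.2 ∧ p.1 + p.2 < 1}
      = regionBetween (fun _ => (0:ℝ)) (fun x => 1 - x) (Set.Ioo 0 1) := by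
    ext ⟨x, y⟩
    simp only [regionBetween, Set.mem_setOf_eq, Set.mem_Ioo]
    constructor
    · rintro ⟨h1, h2, h3⟩; exact ⟨⟨h1, by linarith⟩, h2, by linarith⟩
    · rintro ⟨⟨h1, h2⟩, h3, h4⟩; exact ⟨h1, h3, by linarith⟩
  rw [hset, Measure.volume_eq_prod, volume_regionBetween_eq_integral]
  · congr 1
    simp only [Pi.sub_apply]
    have : ∫ x in Set.Ioo (0:ℝ) 1, ((1 - x) - 0) = ∫ x in (0:ℝ)..1, (1 - x) := by
      rw [intervalIntegral.integral_of_le (by norm_num), MeasureTheory.integral_Ioc_eq_integral_Ioo]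
      simp
    rw [show (∫ y in Set.Ioo (0:ℝ) 1, ((1:ℝ) - y - 0)) = ∫ x in Set.Ioo (0:ℝ) 1, ((1 - x) - 0) from rfl] at this
    simp only [sub_zero] at this ⊢
    rw [this, intervalIntegral.integral_sub intervalIntegrable_const intervalIntegral.intervalIntegrable_id]
    simp [integral_id]
    norm_num
  · exact integrableOn_const (by simp)
  · exact (intervalIntegrable_iff_integrableOn_Ioo_of_le (by norm_num)).1
      ((intervalIntegrable_const (c := (1:ℝ))).sub intervalIntegral.intervalIntegrable_id)
  · exact measurableSet_Ioo
  · intro x hx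
    simp only [Set.mem_Ioo] at hx; linarith [hx.2]

lemma volume_stdTri : volume stdTri = ENNReal.ofReal (1/2 : ℝ) := by
  have hmp : MeasurePreserving ((MeasurableEquiv.toLp 2 (Fin 2 → ℝ)).symm.trans
      (MeasurableEquiv.finTwoArrow)) volume volume :=
    (volume_preserving_finTwoArrow ℝ).comp (EuclideanSpace.volume_preserving_symm_measurableEquiv_toLp (Fin 2))
  have hpre : stdTri = ((MeasurableEquiv.toLp 2 (Fin 2 → ℝ)).symm.trans
      (MeasurableEquiv.finTwoArrow)) ⁻¹' {p : ℝ × ℝ | 0 < p.1 ∧ 0 < p.2 ∧ p.1 + p.2 < 1} := rfl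
  rw [hpre, hmp.measure_preimage ?_, volume_prod_tri]
  apply MeasurableSet.nullMeasurableSet
  have h1 : MeasurableSet {p : ℝ × ℝ | 0 < p.1} := measurableSet_lt measurable_const measurable_fst
  have h2 : MeasurableSet {p : ℝ × ℝ | 0 < p.2} := measurableSet_lt measurable_const measurable_snd
  have h3 : MeasurableSet {p : ℝ × ℝ | p.1 + p.2 < 1} :=
    measurableSet_lt (measurable_fst.add measurable_snd) measurable_const
  have : {p : ℝ × ℝ | 0 < p.1 ∧ 0 < p.2 ∧ p.1 + p.2 < 1}
      = {p : ℝ × ℝ | 0 < p.1} ∩ ({p : ℝ × ℝ | 0 < p.2} ∩ {p : ℝ × ℝ | p.1 + p.2 < 1}) := by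
    ext p; simp [Set.mem_setOf_eq, and_assoc]
  rw [this]
  exact h1.inter (h2.inter h3)

def Lmap (x y : E2) : E2 →ₗ[ℝ] E2 where
  toFun v := v 0 • x + v 1 • y
  map_add' v w := by
    show ((v + w) 0) • x + ((v + w) 1) • y = _
    have h0 : (v + w) 0 = v 0 + w 0 := rfl
    have h1 : (v + w) 1 = v 1 + w 1 := rfl
    rw [h0, h1]; module
  map_smul' k v := by
    show ((k • v) 0) • x + ((k • v) 1) • y = _
    have h0 : (k • v) 0 = k * v 0 := rfl
    have h1 : (k • v) 1 = k * v 1 := rfl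
    rw [h0, h1]; simp; module

lemma Lmap_det (x y : E2) : LinearMap.det (Lmap x y) = x 0 * y 1 - x 1 * y 0 := by
  rw [← LinearMap.det_toMatrix (EuclideanSpace.basisFun (Fin 2) ℝ).toBasis]
  rw [Matrix.det_fin_two]
  have happ : ∀ (i j : Fin 2), (LinearMap.toMatrix (EuclideanSpace.basisFun (Fin 2) ℝ).toBasis
      (EuclideanSpace.basisFun (Fin 2) ℝ).toBasis (Lmap x y)) i j
      = (Lmap x y (EuclideanSpace.single j 1)) i := by
    intro i j
    rw [LinearMap.toMatrix_apply]
    simp [EuclideanSpace.basisFun_apply]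
  rw [happ, happ, happ, happ]
  simp [Lmap, EuclideanSpace.single_apply]
  ring

lemma volume_triangle_ge (a b c : E2) :
    ENNReal.ofReal (|(a - c) 0 * (b - c) 1 - (a - c) 1 * (b - c) 0| * (1/2))
      ≤ volume (convexHull ℝ ({a, b, c} : Set E2)) := by
  set L := Lmap (a - c) (b - c) with hL
  have him : (fun v => c + L v) '' stdTri ⊆ convexHull ℝ ({a, b, c} : Set E2) := by
    rintro - ⟨v, ⟨h0, h1, h2⟩, rfl⟩
    have hrw : c + L v = v 0 • a + v 1 • b + (1 - v 0 - v 1) • c := by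
      show c + (v 0 • (a - c) + v 1 • (b - c)) = _
      module
    show c + L v ∈ _
    rw [hrw]
    have := Finset.centerMass_mem_convexHull (t := (Finset.univ : Finset (Fin 3)))
      (w := ![v 0, v 1, 1 - v 0 - v 1]) (z := ![a, b, c]) (s := ({a, b, c} : Set E2))
      (by intro i _; fin_cases i <;> simp <;> linarith)
      (by simp [Fin.sum_univ_three])
      (by intro i _; fin_cases i <;> simp [Set.mem_insert_iff])
    rw [Finset.centerMass] at this
    simpa [Fin.sum_univ_three, show v 0 + (v 1 + (1 - v 0 - v 1)) = 1 by ring] using this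
  have hvol : volume ((fun v => c + L v) '' stdTri)
      = ENNReal.ofReal (|(a - c) 0 * (b - c) 1 - (a - c) 1 * (b - c) 0|) * volume stdTri := by
    have hcomp : (fun v => c + L v) '' stdTri = (fun z => c + z) '' (L '' stdTri) := by
      rw [Set.image_image]
    rw [hcomp]
    have htrans : volume ((fun z => c + z) '' (L '' stdTri)) = volume (L '' stdTri) := by
      have := measure_vadd (μ := (volume : Measure E2)) c (L '' stdTri)
      simpa [Set.image_vadd] using this
    rw [htrans, Measure.addHaar_image_linearMap, hL, Lmap_det]
  calc ENNReal.ofReal (|(a - c) 0 * (b - c) 1 - (a - c) 1 * (b - c) 0| * (1/2))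
      = ENNReal.ofReal (|(a - c) 0 * (b - c) 1 - (a - c) 1 * (b - c) 0|) * ENNReal.ofReal (1/2 : ℝ) := by
        rw [ENNReal.ofReal_mul (abs_nonneg _)]
    _ = volume ((fun v => c + L v) '' stdTri) := by rw [hvol, volume_stdTri]
    _ ≤ volume (convexHull ℝ ({a, b, c} : Set E2)) := measure_mono him

set_option maxHeartbeats 2000000 in
/-- **Triangle inside a polygon.** Let `e = [a,b]` be the side of the convex polygon `P`
with outward unit normal `n`, and let `α ∈ (0, π/2)` be such that every other side of `P`
makes an angle at least `α` with `e` (equivalently, the unit normals `n'` of other sides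
satisfy `|⟪n, n'⟫| ≤ cos α`). Then the isosceles triangle with base `e` and base angles `α`
lying on the inner side of `e` is contained in `P`; in particular the area of `P` is at
least `(1/4) l² sin α cos α`, where `l` is the length of `e`. -/
theorem triangle_in_polygon
    (P : Set (EuclideanSpace ℝ (Fin 2))) (hP : IsConvexPolygon P)
    (a b n : EuclideanSpace ℝ (Fin 2)) (hab : a ≠ b) (hn : ‖n‖ = 1)
    (he : face P n = segment ℝ a b)
    (α : ℝ) (hα : 0 < α) (hα' : α < Real.pi / 2)
    (hangle : ∀ n' : EuclideanSpace ℝ (Fin 2), ‖n'‖ = 1 →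
      faceDim (face P n') = 1 → face P n' ≠ segment ℝ a b →
      |inner (𝕜 := ℝ) n n'| ≤ Real.cos α) :
    convexHull ℝ {a, b, (1/2 : ℝ) • (a + b) - ((dist a b / 2) * Real.tan α) • n} ⊆ P ∧
    (1/4) * (dist a b)^2 * Real.sin α * Real.cos α ≤ (volume P).toReal := by
  classical
  obtain ⟨⟨S, hS⟩, hint⟩ := hP
  set l := dist a b with hldef
  have hlpos : 0 < l := dist_pos.2 hab
  have hcospos : 0 < Real.cos α := Real.cos_pos_of_mem_Ioo ⟨by linarith [Real.pi_pos], hα'⟩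
  have hsinpos : 0 < Real.sin α := Real.sin_pos_of_pos_of_lt_pi hα (by linarith [Real.pi_pos])
  have htanpos : 0 < Real.tan α := Real.tan_pos_of_pos_of_lt_pi_div_two hα hα'
  set c := (1/2 : ℝ) • (a + b) - (l / 2 * Real.tan α) • n with hcdef
  have hPconv : Convex ℝ P := hS ▸ convex_convexHull ℝ _
  have hPcompact : IsCompact P := hS ▸ S.finite_toSet.isCompact_convexHull ℝ
  have hPclosed : IsClosed P := hPcompact.isClosed
  have haF : a ∈ face P n := by rw [he]; exact left_mem_segment ℝ a b
  have hbF : b ∈ face P n := by rw [he]; exact right_mem_segment ℝ a b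
  have haP : a ∈ P := haF.1
  have hbP : b ∈ P := hbF.1
  have habn : inner (𝕜 := ℝ) a n = inner (𝕜 := ℝ) b n :=
    le_antisymm (hbF.2 a haP) (haF.2 b hbP)
  have hperp : inner (𝕜 := ℝ) (b - a) n = 0 := by rw [inner_sub_left]; linarith
  have hn0 : n ≠ 0 := by intro h; rw [h, norm_zero] at hn; norm_num at hn
  have hlin : ∀ v : E2, IsLinearMap ℝ (fun y : E2 => inner (𝕜 := ℝ) y v) := fun v =>
    ⟨fun x y => inner_add_left x y v, fun k x => by rw [real_inner_smul_left]; rfl⟩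
  -- Key step A: the apex is on the inner side of every supporting line of a side.
  have keyA : ∀ u : E2, u ≠ 0 → ∀ p ∈ face P u, faceDim (face P u) = 1 →
      inner (𝕜 := ℝ) c u ≤ inner (𝕜 := ℝ) p u := by
    intro u hu p hp hdim
    set u' := ‖u‖⁻¹ • u with hu'def
    have hnu : 0 < ‖u‖ := norm_pos_iff.2 hu
    have hu'1 : ‖u'‖ = 1 := norm_smul_inv_norm hu
    have hfe : face P u' = face P u := face_smul P u ‖u‖⁻¹ (by positivity)
    have hpF' : p ∈ face P u' := by rw [hfe]; exact hp
    suffices hsuff : inner (𝕜 := ℝ) c u' ≤ inner (𝕜 := ℝ) p u' by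
      have hscale : ∀ z : E2, inner (𝕜 := ℝ) z u' = ‖u‖⁻¹ * inner (𝕜 := ℝ) z u := by
        intro z
        rw [hu'def, real_inner_smul_right]
      rw [hscale c, hscale p] at hsuff
      exact le_of_mul_le_mul_left hsuff (by positivity)
    by_cases hseg : face P u' = segment ℝ a b
    · -- the side is the base itself: u' = ± n
      have haF' : a ∈ face P u' := by rw [hseg]; exact left_mem_segment ℝ a b
      have hbF' : b ∈ face P u' := by rw [hseg]; exact right_mem_segment ℝ a b
      have hperp' : inner (𝕜 := ℝ) (b - a) u' = 0 := by
        rw [inner_sub_left]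
        have h1 := haF'.2 b hbP
        have h2 := hbF'.2 a haP
        linarith
      have hba0 : b - a ≠ 0 := sub_ne_zero.2 (Ne.symm hab)
      have horthrank : Module.finrank ℝ ((Submodule.span ℝ ({b - a} : Set E2))ᗮ) = 1 := by
        have h := Submodule.finrank_add_finrank_orthogonal
          (K := Submodule.span ℝ ({b - a} : Set E2)) (E := E2)
        rw [finrank_span_singleton hba0] at h
        have h2 : Module.finrank ℝ E2 = 2 := finrank_euclideanSpace_fin
        omega
      have hnW : n ∈ (Submodule.span ℝ ({b - a} : Set E2))ᗮ := by
        rw [Submodule.mem_orthogonal_singleton_iff_inner_right]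
        exact hperp
      have hu'W : u' ∈ (Submodule.span ℝ ({b - a} : Set E2))ᗮ := by
        rw [Submodule.mem_orthogonal_singleton_iff_inner_right]
        exact hperp'
      have hspan : Submodule.span ℝ ({n} : Set E2) = (Submodule.span ℝ ({b - a} : Set E2))ᗮ := by
        apply Submodule.eq_of_le_of_finrank_eq
        · rw [Submodule.span_le, Set.singleton_subset_iff]; exact hnW
        · rw [finrank_span_singleton hn0, horthrank]
      obtain ⟨k, hk⟩ := Submodule.mem_span_singleton.1 (hspan ▸ hu'W)
      have hkabs : |k| = 1 := by
        have := congrArg norm hk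
        rw [norm_smul, Real.norm_eq_abs, hn, mul_one, hu'1] at this
        exact this
      rcases (abs_eq (by norm_num : (0:ℝ) ≤ 1)).1 hkabs with hk1 | hk1
      · -- u' = n
        have hu'n : u' = n := by rw [← hk, hk1, one_smul]
        have hpn : p ∈ face P n := by rw [← hu'n]; exact hpF'
        have hpan : inner (𝕜 := ℝ) p n = inner (𝕜 := ℝ) a n :=
          le_antisymm (haF.2 p hpn.1) (hpn.2 a haP)
        have hnn : inner (𝕜 := ℝ) n n = 1 := by
          rw [real_inner_self_eq_norm_sq, hn]; norm_num
        have hcn : inner (𝕜 := ℝ) c n = inner (𝕜 := ℝ) a n - l / 2 * Real.tan α := by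
          rw [hcdef, inner_sub_left, real_inner_smul_left, inner_add_left, real_inner_smul_left,
            hnn, habn]
          ring
        rw [hu'n, hcn, hpan]
        nlinarith
      · -- u' = -n : degenerate, P lies in a line
        exfalso
        have hu'n : u' = -n := by rw [← hk, hk1]; module
        have hall : P ⊆ {y : E2 | inner (𝕜 := ℝ) y n = inner (𝕜 := ℝ) a n} := by
          intro y hy
          have h1 := haF.2 y hy
          have h2 := haF'.2 y hy
          rw [hu'n, inner_neg_right, inner_neg_right] at h2
          have : inner (𝕜 := ℝ) a n ≤ inner (𝕜 := ℝ) y n := by linarith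
          exact le_antisymm h1 this
        have hie := interior_mono hall
        rw [interior_hyperplane_empty n hn0] at hie
        obtain ⟨z, hz⟩ := hint
        exact Set.notMem_empty z (hie hz)
    · -- a genuine other side: use the angle hypothesis
      have hdim' : faceDim (face P u') = 1 := by rw [hfe]; exact hdim
      have hcos := hangle u' hu'1 hdim' hseg
      have happ := apex_le a b n u' α hab hn hu'1 hperp hcos hα hα'
      rw [← hldef, ← hcdef] at happ
      exact happ.trans (max_le (hpF'.2 a haP) (hpF'.2 b hbP))
  -- Main step: the apex is in P.
  have hcP : c ∈ P := by
    by_contra hcP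
    have hPne : P.Nonempty := ⟨a, haP⟩
    obtain ⟨p, hpP, hproj⟩ : ∃ p ∈ P, ∀ y ∈ P, inner (𝕜 := ℝ) (c - p) (y - p) ≤ 0 := by
      obtain ⟨p, hp, hmin⟩ := exists_norm_eq_iInf_of_complete_convex hPne
        hPclosed.isComplete hPconv c
      exact ⟨p, hp, (norm_eq_iInf_iff_real_inner_le_zero hPconv hp).1 hmin⟩
    have hu₀ : c - p ≠ 0 := sub_ne_zero.2 (fun h => hcP (h ▸ hpP))
    have hpmax : ∀ y ∈ P, inner (𝕜 := ℝ) y (c - p) ≤ inner (𝕜 := ℝ) p (c - p) := by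
      intro y hy
      have h2 : inner (𝕜 := ℝ) (y - p) (c - p) ≤ 0 := by
        rw [real_inner_comm]; exact hproj y hy
      rw [inner_sub_left] at h2; linarith
    have hpF : p ∈ face P (c - p) := ⟨hpP, hpmax⟩
    have hCpos : 0 < inner (𝕜 := ℝ) (c - p) (c - p) := by
      rw [real_inner_self_eq_norm_sq]
      have : 0 < ‖c - p‖ := norm_pos_iff.2 hu₀
      positivity
    have hcgt : inner (𝕜 := ℝ) p (c - p) < inner (𝕜 := ℝ) c (c - p) := by
      rw [inner_sub_left] at hCpos; linarith
    have hd1 : faceDim (face P (c - p)) ≤ 1 := faceDim_le_one P (c - p) hu₀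
    rcases Nat.le_one_iff_eq_zero_or_eq_one.1 hd1 with hd0 | hd1'
    · -- vertex case
      have hsingle : ∀ x ∈ face P (c - p), x = p := by
        intro x hx
        have hbot : vectorSpan ℝ (face P (c - p)) = ⊥ := by
          have h0 := hd0
          unfold faceDim at h0; rw [direction_affineSpan] at h0
          exact Submodule.finrank_eq_zero.1 h0
        have hxp : x -ᵥ p ∈ vectorSpan ℝ (face P (c - p)) := vsub_mem_vectorSpan ℝ hx hpF
        rw [hbot, Submodule.mem_bot] at hxp
        simpa [sub_eq_zero] using hxp
      have hSne : S.Nonempty := by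
        rw [← Finset.coe_nonempty]
        by_contra hS0
        rw [Set.not_nonempty_iff_eq_empty] at hS0
        have : a ∈ convexHull ℝ (S : Set E2) := hS ▸ haP
        rw [hS0, convexHull_empty] at this
        exact this
      obtain ⟨sm, hsmS, hsmmax⟩ := S.exists_max_image (fun s => inner (𝕜 := ℝ) s (c - p)) hSne
      have hhull : P ⊆ {y : E2 | inner (𝕜 := ℝ) y (c - p) ≤ inner (𝕜 := ℝ) sm (c - p)} := by
        rw [hS]
        exact convexHull_min (fun s hs => hsmmax s hs) (convex_halfSpace_le (hlin (c - p)) _)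
      have hsmP : sm ∈ P := hS ▸ subset_convexHull ℝ _ hsmS
      have hsmF : sm ∈ face P (c - p) := ⟨hsmP, fun y hy => hhull hy⟩
      have hpS : p ∈ S := by rw [← hsingle sm hsmF]; exact hsmS
      have hstrict : ∀ s ∈ S, s ≠ p → inner (𝕜 := ℝ) (s - p) (c - p) < 0 := by
        intro s hs hsp
        have hsP : s ∈ P := hS ▸ subset_convexHull ℝ _ hs
        have hle := hpmax s hsP
        rw [inner_sub_left]
        rcases lt_or_eq_of_le hle with h | h
        · linarith
        · exact absurd (hsingle s ⟨hsP, fun y hy => le_of_le_of_eq (hpmax y hy) h.symm⟩) hsp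
      have hCpos' : 0 < inner (𝕜 := ℝ) (c - p) (c - p) := hCpos
      -- the rotation argument
      have hfinish : ∀ w : E2, inner (𝕜 := ℝ) (c - p) w = 0 →
          (∃ s ∈ S, 0 < inner (𝕜 := ℝ) (s - p) w) → False := by
        intro w hDw hTw
        obtain ⟨u', s₀, hs₀S, hs₀p, hzero, hle, hpos'⟩ :=
          exit_ray S p (c - p) w (c - p) hstrict hCpos' hDw hTw
        have hu' : u' ≠ 0 := by
          intro h; rw [h, inner_zero_right] at hpos'; exact lt_irrefl 0 hpos'
        have hpmax' : ∀ y ∈ P, inner (𝕜 := ℝ) y u' ≤ inner (𝕜 := ℝ) p u' := by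
          have hhalf : P ⊆ {y : E2 | inner (𝕜 := ℝ) y u' ≤ inner (𝕜 := ℝ) p u'} := by
            rw [hS]
            apply convexHull_min ?_ (convex_halfSpace_le (hlin u') _)
            intro s hs
            have h3 := hle s hs
            rw [inner_sub_left] at h3
            simp only [Set.mem_setOf_eq]
            linarith
          exact fun y hy => hhalf hy
        have hpF2 : p ∈ face P u' := ⟨hpP, hpmax'⟩
        have hs₀P : s₀ ∈ P := hS ▸ subset_convexHull ℝ _ hs₀S
        have hs₀eq : inner (𝕜 := ℝ) s₀ u' = inner (𝕜 := ℝ) p u' := by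
          rw [inner_sub_left] at hzero; linarith
        have hs₀F : s₀ ∈ face P u' := ⟨hs₀P, fun y hy => le_of_le_of_eq (hpmax' y hy) hs₀eq.symm⟩
        have hdeq : faceDim (face P u') = 1 := by
          have hle1 := faceDim_le_one P u' hu'
          have hne0 : faceDim (face P u') ≠ 0 := by
            intro h0
            unfold faceDim at h0; rw [direction_affineSpan] at h0
            have hmem : s₀ -ᵥ p ∈ vectorSpan ℝ (face P u') := vsub_mem_vectorSpan ℝ hs₀F hpF2
            rw [Submodule.finrank_eq_zero.1 h0, Submodule.mem_bot] at hmem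
            exact hs₀p (by simpa [sub_eq_zero] using hmem)
          omega
        have hcle := keyA u' hu' p hpF2 hdeq
        rw [inner_sub_left] at hpos'
        linarith
      by_cases hpos : ∃ s ∈ S, 0 < inner (𝕜 := ℝ) (s - p) (rot (c - p))
      · exact hfinish (rot (c - p)) (inner_rot_self (c - p)) hpos
      · by_cases hneg : ∃ s ∈ S, inner (𝕜 := ℝ) (s - p) (rot (c - p)) < 0
        · apply hfinish (-(rot (c - p)))
          · rw [inner_neg_right, inner_rot_self]; ring
          · obtain ⟨s, hs, hsw⟩ := hneg
            exact ⟨s, hs, by rw [inner_neg_right]; linarith⟩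
        · -- all of S on a line: contradiction with nonempty interior
          push_neg at hpos hneg
          have hallz : ∀ s ∈ (S : Set E2),
              s ∈ {y : E2 | inner (𝕜 := ℝ) y (rot (c - p)) = inner (𝕜 := ℝ) p (rot (c - p))} := by
            intro s hs
            have h1 := hpos s hs
            have h2 := hneg s hs
            have h3 : inner (𝕜 := ℝ) (s - p) (rot (c - p)) = 0 := le_antisymm h1 (le_of_not_gt (by
              intro hlt; exact absurd hlt (not_lt.2 h2)))
            rw [inner_sub_left] at h3
            simp only [Set.mem_setOf_eq]
            linarith
          have hPsub : P ⊆ {y : E2 |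
              inner (𝕜 := ℝ) y (rot (c - p)) = inner (𝕜 := ℝ) p (rot (c - p))} := by
            rw [hS]
            exact convexHull_min hallz (convex_hyperplane (hlin (rot (c - p))) _)
          have hie := interior_mono hPsub
          rw [interior_hyperplane_empty (rot (c - p)) (rot_ne_zero _ hu₀)] at hie
          obtain ⟨z, hz⟩ := hint
          exact Set.notMem_empty z (hie hz)
    · -- edge case directly
      have := keyA (c - p) hu₀ p hpF hd1'
      linarith
  -- Conclusion, part 1
  have hsub : convexHull ℝ ({a, b, c} : Set E2) ⊆ P := by
    apply convexHull_min ?_ hPconv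
    intro x hx
    rcases hx with rfl | rfl | rfl
    · exact haP
    · exact hbP
    · exact hcP
  refine ⟨hsub, ?_⟩
  -- Part 2 : area bound
  set t := l / 2 * Real.tan α with htdef
  have htpos : 0 < t := by positivity
  have hc0 : ∀ i : Fin 2, c i = (a i + b i) / 2 - t * n i := by
    intro i
    rw [hcdef]
    have h1 : ((1/2 : ℝ) • (a + b) - (l / 2 * Real.tan α) • n) i
        = (1/2 : ℝ) * (a i + b i) - (l / 2 * Real.tan α) * n i := rfl
    rw [h1, htdef]; ring
  have hn2 : n 0 ^ 2 + n 1 ^ 2 = 1 := by rw [← norm_sq_coords, hn]; norm_num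
  have hper : (b 0 - a 0) * n 0 + (b 1 - a 1) * n 1 = 0 := by
    have := hperp
    rw [real_inner_coords] at this
    simpa using this
  have hl2 : (a 0 - b 0) ^ 2 + (a 1 - b 1) ^ 2 = l ^ 2 := by
    have : ‖a - b‖ ^ 2 = (a - b) 0 ^ 2 + (a - b) 1 ^ 2 := norm_sq_coords (a - b)
    rw [show (a-b) 0 = a 0 - b 0 from rfl, show (a-b) 1 = a 1 - b 1 from rfl] at this
    rw [← this, hldef, dist_eq_norm]
  have hcross : ((a 0 - b 0) * n 1 - (a 1 - b 1) * n 0) ^ 2 = l ^ 2 := by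
    linear_combination ((a 0 - b 0)^2 + (a 1 - b 1)^2) * hn2 + hl2
      + ((a 0 - b 0) * n 0 + (a 1 - b 1) * n 1) * hper
  have e0 : (a - c) 0 = (a 0 - b 0) / 2 + t * n 0 := by
    rw [show (a - c) 0 = a 0 - c 0 from rfl, hc0 0]; ring
  have e1 : (a - c) 1 = (a 1 - b 1) / 2 + t * n 1 := by
    rw [show (a - c) 1 = a 1 - c 1 from rfl, hc0 1]; ring
  have e2 : (b - c) 0 = (b 0 - a 0) / 2 + t * n 0 := by
    rw [show (b - c) 0 = b 0 - c 0 from rfl, hc0 0]; ring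
  have e3 : (b - c) 1 = (b 1 - a 1) / 2 + t * n 1 := by
    rw [show (b - c) 1 = b 1 - c 1 from rfl, hc0 1]; ring
  have hDeq : (a - c) 0 * (b - c) 1 - (a - c) 1 * (b - c) 0
      = t * ((a 0 - b 0) * n 1 - (a 1 - b 1) * n 0) := by
    rw [e0, e1, e2, e3]; ring
  have hDval : ((a - c) 0 * (b - c) 1 - (a - c) 1 * (b - c) 0) ^ 2 = (t * l) ^ 2 := by
    rw [hDeq]
    linear_combination t ^ 2 * hcross
  have hDabs : |(a - c) 0 * (b - c) 1 - (a - c) 1 * (b - c) 0| = t * l := by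
    calc |(a - c) 0 * (b - c) 1 - (a - c) 1 * (b - c) 0|
        = Real.sqrt (((a - c) 0 * (b - c) 1 - (a - c) 1 * (b - c) 0) ^ 2) :=
          (Real.sqrt_sq_eq_abs _).symm
      _ = Real.sqrt ((t * l) ^ 2) := by rw [hDval]
      _ = t * l := Real.sqrt_sq (by positivity)
  have htri := volume_triangle_ge a b c
  rw [hDabs] at htri
  have hmono : ENNReal.ofReal (t * l * (1/2)) ≤ volume P := htri.trans (measure_mono hsub)
  have hfin : volume P ≠ ⊤ := hPcompact.measure_lt_top.ne
  have hle2 : t * l * (1/2) ≤ (volume P).toReal := (ENNReal.ofReal_le_iff_le_toReal hfin).1 hmono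
  have hsc : Real.sin α * Real.cos α ≤ Real.tan α := by
    rw [Real.tan_eq_sin_div_cos, le_div_iff₀ hcospos]
    nlinarith [Real.sin_sq_add_cos_sq α, hsinpos.le, hcospos.le, Real.cos_le_one α]
  have hfinal : (1/4) * l ^ 2 * Real.sin α * Real.cos α ≤ t * l * (1/2) := by
    rw [htdef]
    nlinarith [mul_le_mul_of_nonneg_left hsc (show (0:ℝ) ≤ (1/4) * l^2 by positivity), hlpos]
  linarith
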